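/- Let ψ(O; a) = φ₀(Z, A)(Y − h₀(W, A)) · (1/p(A)) · 1[A = a] + h₀(W, a) − θ(a), where A is discrete with p(a) > 0, h₀ is an outcome bridge function, φ₀ is a treatment bridge function, and θ(a) = E[h₀(W, a)]. Then E[ψ(O; a)] = 0. Equivalently, θ(a) = E[φ₀(Z, a)(Y − h₀(W, a)) | A = a] + E[h₀(W, a)]. -/

import Mathlib

open MeasureTheory
open scoped ENNReal

/-- Bochner integral against a `bind` vanishes when the a.e. inner integrals vanish. -/
lemma integral_bind_eq_zero {B X : Type*} [MeasurableSpace B] [MeasurableSpace X]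
    (ν : Measure B) (G : B → Measure X) (hG : Measurable G)
    (f : X → ℝ) (hf : StronglyMeasurable f)
    (hint : Integrable f (ν.bind G))
    (h0 : ∀ᵐ b ∂ν, ∫ x, f x ∂(G b) = 0) :
    ∫ x, f x ∂(ν.bind G) = 0 := by
  have hfm : Measurable f := hf.measurable
  have hpos : Measurable fun x => ENNReal.ofReal (f x) :=
    ENNReal.measurable_ofReal.comp hfm
  have hneg : Measurable fun x => ENNReal.ofReal (-f x) :=
    ENNReal.measurable_ofReal.comp hfm.neg
  have hnorm : Measurable fun x => (‖f x‖₊ : ℝ≥0∞) := hfm.enorm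
  have hfin : ∫⁻ b, ∫⁻ x, (‖f x‖₊ : ℝ≥0∞) ∂(G b) ∂ν < ⊤ := by
    rw [← Measure.lintegral_bind hG.aemeasurable hnorm.aemeasurable]
    exact hint.2
  have hmeasI : Measurable fun b => ∫⁻ x, (‖f x‖₊ : ℝ≥0∞) ∂(G b) :=
    (Measure.measurable_lintegral hnorm).comp hG
  have hae_fin : ∀ᵐ b ∂ν, ∫⁻ x, (‖f x‖₊ : ℝ≥0∞) ∂(G b) < ⊤ :=
    ae_lt_top hmeasI hfin.ne
  have key : ∀ᵐ b ∂ν,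
      ∫⁻ x, ENNReal.ofReal (f x) ∂(G b) = ∫⁻ x, ENNReal.ofReal (-f x) ∂(G b) := by
    filter_upwards [hae_fin, h0] with b hb hb0
    have hip : ∫⁻ x, ENNReal.ofReal (f x) ∂(G b) ≤ ∫⁻ x, (‖f x‖₊ : ℝ≥0∞) ∂(G b) := by
      refine lintegral_mono fun x => ?_
      rw [← enorm_eq_nnnorm, Real.enorm_eq_ofReal_abs]
      exact ENNReal.ofReal_le_ofReal (le_abs_self _)
    have hin : ∫⁻ x, ENNReal.ofReal (-f x) ∂(G b) ≤ ∫⁻ x, (‖f x‖₊ : ℝ≥0∞) ∂(G b) := by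
      refine lintegral_mono fun x => ?_
      rw [← enorm_eq_nnnorm, Real.enorm_eq_ofReal_abs]
      exact ENNReal.ofReal_le_ofReal ((neg_le_abs _))
    have hintb : Integrable f (G b) := ⟨hf.aestronglyMeasurable, hb⟩
    have := integral_eq_lintegral_pos_part_sub_lintegral_neg_part hintb
    rw [hb0] at this
    have heq : (∫⁻ x, ENNReal.ofReal (f x) ∂(G b)).toReal
        = (∫⁻ x, ENNReal.ofReal (-f x) ∂(G b)).toReal := by linarith
    exact (ENNReal.toReal_eq_toReal_iff' (lt_of_le_of_lt hip hb).ne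
      (lt_of_le_of_lt hin hb).ne).mp heq
  rw [integral_eq_lintegral_pos_part_sub_lintegral_neg_part hint,
    Measure.lintegral_bind hG.aemeasurable hpos.aemeasurable, Measure.lintegral_bind hG.aemeasurable hneg.aemeasurable,
    lintegral_congr_ae key, sub_self]

/-- For discrete treatment `A` with `p(a) > 0`, an outcome bridge `h₀`,
a treatment bridge `φ₀`, and `θ(a) = E[h₀(W, a)]`, the efficient influence function
`ψ(O; a) = φ₀(Z,A)(Y − h₀(W,A)) (1/p(A)) 1[A = a] + h₀(W, a) − θ(a)` has mean zero;
equivalently `θ(a) = E[φ₀(Z,a)(Y − h₀(W,a)) | A = a] + E[h₀(W,a)]`. -/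
theorem eif_mean_zero_discrete
    {Z W A : Type*} [MeasurableSpace Z] [MeasurableSpace W]
    [MeasurableSpace A] [Fintype A] [DecidableEq A] [MeasurableSingletonClass A]
    -- joint law of O = (Z, W, Y, A)
    (μ : Measure (Z × W × ℝ × A)) [IsProbabilityMeasure μ]
    -- p(a) = P(A = a) > 0
    (pa : A → ℝ)
    (hpa : ∀ b, pa b = (μ {p | p.2.2.2 = b}).toReal)
    (hpapos : ∀ b, 0 < pa b)
    (h₀ : W → A → ℝ) (φ₀ : Z → A → ℝ) (θ : A → ℝ)
    -- marginal law of W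
    (μW : Measure W) (hμW : μW = μ.map fun p => p.2.1)
    -- conditional law of O given A = b
    (μcond : A → Measure (Z × W × ℝ × A))
    (hμcond : ∀ b, μcond b = ProbabilityTheory.cond μ {p | p.2.2.2 = b})
    -- outcome bridge: E[Y − h₀(W, A) | Z, A] = 0, via a disintegration along (Z, A)
    (κZA : Z × A → Measure (W × ℝ))
    (hdisZA : μ = (μ.map fun p => (p.1, p.2.2.2)).bind
        fun za => (κZA za).map fun q => (za.1, q.1, q.2, za.2))
    (hbridge_out : ∀ᵐ za ∂ μ.map (fun p => (p.1, p.2.2.2)),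
        ∫ q, (q.2 - h₀ q.1 za.2) ∂ κZA za = 0)
    -- treatment bridge: E[φ₀(Z, b) | W, A = b] = p(W)p(b)/p(W, b)
    (κW : A → W → Measure Z)
    (r : W → A → ℝ) (hr0 : ∀ w b, 0 ≤ r w b)
    (hratio : ∀ b, (((μcond b).map fun p => p.2.1).withDensity
        fun w => ENNReal.ofReal (r w b)) = μW)
    (hdisW : ∀ b, (μcond b).map (fun p => (p.1, p.2.1)) =
        ((μcond b).map fun p => p.2.1).bind fun w => (κW b w).map fun z => (z, w))
    (hbridge_treat : ∀ b, ∀ᵐ w ∂ (μcond b).map (fun p => p.2.1),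
        ∫ z, φ₀ z b ∂ κW b w = r w b)
    -- dose-response: θ(b) = E[h₀(W, b)] over the marginal law of W
    (hθ : ∀ b, θ b = ∫ w, h₀ w b ∂ μW)
    (a : A)
    (hint : Integrable (fun p : Z × W × ℝ × A =>
        φ₀ p.1 p.2.2.2 * (p.2.2.1 - h₀ p.2.1 p.2.2.2) * (1 / pa p.2.2.2)
          * (if p.2.2.2 = a then (1 : ℝ) else 0)) μ)
    (hint2 : Integrable (fun p : Z × W × ℝ × A =>
        φ₀ p.1 a * (p.2.2.1 - h₀ p.2.1 a)) (μcond a))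
    (hintW : Integrable (fun w => h₀ w a) μW) :
    (∫ p : Z × W × ℝ × A,
        (φ₀ p.1 p.2.2.2 * (p.2.2.1 - h₀ p.2.1 p.2.2.2) * (1 / pa p.2.2.2)
            * (if p.2.2.2 = a then (1 : ℝ) else 0)
          + h₀ p.2.1 a - θ a) ∂ μ) = 0
    ∧ θ a = (∫ p : Z × W × ℝ × A, φ₀ p.1 a * (p.2.2.1 - h₀ p.2.1 a) ∂ μcond a)
        + ∫ w, h₀ w a ∂ μW := by
  -- Notation
  set g : Z × W × ℝ × A → ℝ := fun p =>
    φ₀ p.1 p.2.2.2 * (p.2.2.1 - h₀ p.2.1 p.2.2.2) * (1 / pa p.2.2.2)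
      * (if p.2.2.2 = a then (1 : ℝ) else 0) with hg_def
  set ν : Measure (Z × A) := μ.map (fun p : Z × W × ℝ × A => (p.1, p.2.2.2)) with hν_def
  set F : Z × A → Measure (Z × W × ℝ × A) :=
    fun za => (κZA za).map fun q => (za.1, q.1, q.2, za.2) with hF_def
  -- F is a.e. measurable
  have hFae : AEMeasurable F ν := by
    by_contra h
    have h1 : ν.map F = 0 := Measure.map_of_not_aemeasurable h
    have h2 : μ = 0 := by
      rw [hdisZA]
      show (ν.bind F) = 0
      rw [Measure.bind, h1, Measure.join_zero]
    have := measure_univ (μ := μ)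
    simp [h2] at this
  set G : Z × A → Measure (Z × W × ℝ × A) := hFae.mk F with hG_def
  have hGmeas : Measurable G := hFae.measurable_mk
  have hGeq : F =ᵐ[ν] G := hFae.ae_eq_mk
  have hbind : μ = ν.bind G := by
    rw [hdisZA]
    show ν.bind F = ν.bind G
    rw [Measure.bind, Measure.bind, Measure.map_congr hGeq]
  -- measurable version of g
  have hgae : AEStronglyMeasurable g μ := hint.1
  set g' : Z × W × ℝ × A → ℝ := hgae.mk g with hg'_def
  have hg'sm : StronglyMeasurable g' := hgae.stronglyMeasurable_mk
  have hgg'μ : g =ᵐ[μ] g' := hgae.ae_eq_mk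
  have hint' : Integrable g' μ := hint.congr hgg'μ
  -- null set where g ≠ g'
  obtain ⟨N, hNsub, hNm, hN0⟩ :=
    exists_measurable_superset_of_null (ae_iff.mp hgg'μ)
  have hN0' : ∫⁻ b, G b N ∂ν = 0 := by
    rw [← Measure.bind_apply hNm hGmeas.aemeasurable, ← hbind]; exact hN0
  have hGN : ∀ᵐ b ∂ν, G b N = 0 := by
    have := (lintegral_eq_zero_iff ((Measure.measurable_coe hNm).comp hGmeas)).mp hN0'
    filter_upwards [this] with b hb using hb
  -- inner integrals vanish
  have h0 : ∀ᵐ b ∂ν, ∫ x, g' x ∂(G b) = 0 := by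
    filter_upwards [hGeq, hGN, hbridge_out] with b hb1 hb2 hb3
    have hgg' : g =ᵐ[G b] g' := by
      rw [Filter.EventuallyEq, ae_iff]
      exact measure_mono_null hNsub hb2
    rw [integral_congr_ae hgg'.symm, ← hb1]
    have hgFb : AEStronglyMeasurable g (F b) := by
      refine hg'sm.aestronglyMeasurable.congr ?_
      rw [hb1]; exact hgg'.symm
    have hemeas : Measurable fun q : W × ℝ => (b.1, q.1, q.2, b.2) :=
      measurable_const.prodMk (measurable_fst.prodMk
        (measurable_snd.prodMk measurable_const))
    rw [hF_def] at hgFb ⊢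
    rw [integral_map hemeas.aemeasurable hgFb]
    have hrw : ∀ q : W × ℝ, g (b.1, q.1, q.2, b.2)
        = (φ₀ b.1 b.2 * (1 / pa b.2) * (if b.2 = a then (1 : ℝ) else 0))
          * (q.2 - h₀ q.1 b.2) := by
      intro q; rw [hg_def]; ring
    simp_rw [hrw]
    rw [integral_const_mul, hb3, mul_zero]
  -- the main vanishing integral
  have hgint0 : ∫ p, g p ∂μ = 0 := by
    rw [integral_congr_ae hgg'μ]
    calc ∫ p, g' p ∂μ = ∫ p, g' p ∂(ν.bind G) := by rw [← hbind]
      _ = 0 := integral_bind_eq_zero ν G hGmeas g' hg'sm (hbind ▸ hint') h0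
  -- set A = a
  set s : Set (Z × W × ℝ × A) := {p | p.2.2.2 = a} with hs_def
  have hs : MeasurableSet s := measurable_snd.snd.snd (measurableSet_singleton a)
  -- E[h₀(W,a)] over μ
  have hm2 : Measurable fun p : Z × W × ℝ × A => p.2.1 := measurable_snd.fst
  rw [hμW] at hintW hθ
  have hintH : Integrable (fun p : Z × W × ℝ × A => h₀ p.2.1 a) μ :=
    (integrable_map_measure hintW.1 hm2.aemeasurable).mp hintW
  have hHint : ∫ p : Z × W × ℝ × A, h₀ p.2.1 a ∂μ
      = ∫ w, h₀ w a ∂(μ.map fun p : Z × W × ℝ × A => p.2.1) :=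
    (integral_map hm2.aemeasurable hintW.1).symm
  -- conditional integral vanishes
  have hcond0 : (∫ p : Z × W × ℝ × A, φ₀ p.1 a * (p.2.2.1 - h₀ p.2.1 a) ∂ μcond a) = 0 := by
    rw [hμcond a, ProbabilityTheory.cond, integral_smul_measure,
      ← integral_indicator hs]
    have hind : ∀ p : Z × W × ℝ × A,
        s.indicator (fun p => φ₀ p.1 a * (p.2.2.1 - h₀ p.2.1 a)) p = pa a * g p := by
      intro p
      simp only [Set.indicator_apply]
      split_ifs with hp
      · have hp' : p.2.2.2 = a := hp
        rw [hg_def]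
        have hne : pa a ≠ 0 := (hpapos a).ne'
        simp only [hp', if_pos rfl, if_true]
        field_simp
      · have hp' : ¬ p.2.2.2 = a := hp
        rw [hg_def]
        simp [hp']
    simp_rw [hind]
    rw [integral_const_mul, hgint0, mul_zero, smul_zero]
  constructor
  · have h1 : ∫ p : Z × W × ℝ × A, (g p + h₀ p.2.1 a - θ a) ∂μ
        = (∫ p, g p ∂μ + ∫ p : Z × W × ℝ × A, h₀ p.2.1 a ∂μ) - θ a := by
      rw [integral_sub (f := fun p : Z × W × ℝ × A => g p + h₀ p.2.1 a)
        (g := fun _ => θ a) (hint.add hintH) (integrable_const (θ a)),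
        integral_add hint hintH, integral_const]
      simp
    rw [show (∫ p : Z × W × ℝ × A,
        (φ₀ p.1 p.2.2.2 * (p.2.2.1 - h₀ p.2.1 p.2.2.2) * (1 / pa p.2.2.2)
            * (if p.2.2.2 = a then (1 : ℝ) else 0)
          + h₀ p.2.1 a - θ a) ∂ μ)
        = ∫ p : Z × W × ℝ × A, (g p + h₀ p.2.1 a - θ a) ∂μ from rfl, h1,
      hgint0, zero_add, hHint, hθ a, sub_self]
  · rw [hcond0, zero_add, hμW]
    exact hθ a
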